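/- Let G be a split graph on d−1 vertices with vertex partition into a clique C and a stable set S. Then the number of primitive faces of the Hansen polytope H(G), i.e., nonempty faces contained in no type-(1)-facet [ε, B] (ε ∈ {+1,−1}, B ⊆ C), equals the number of partitions (C⁺, C⁻, C⁰, S⁺, S⁻, S⁰) of (C,S) — including the trivial partition with C⁰ = C and S⁰ = S — satisfying condition (A): every element of C⁺ ∪ C⁻ has a neighbor in S⁺ ∪ S⁻. -/

import Mathlib

/-!
A nonempty exposed face of `H(G)` is cut out by a functional `a x₀ + ∑ wᵢ xᵢ` and, being the convex
hull of the vertices it contains (Krein–Milman), is determined by the stable sets `I` for which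
`v_I = e₀ + ∑_{i ∈ I} eᵢ` or `-v_I` lies on it. A stable set meets the clique `C` at most once, so
a face avoids every facet `[ε, B]` exactly when it contains some `v_I` and some `-v_J` with
`I, J ⊆ S`. This forces `a` and `w` to be balanced, and the vertices of the face are then read off
from `S⁺ = {w > 0}`, `S⁻ = {w < 0}` and the clique vertices whose weight equals the positive
(resp. negative) weight of their neighbourhood in `S`. The clique vertices with both equalities are
exactly those without neighbours in `S⁺ ∪ S⁻`; discarding them leaves `C⁺` and `C⁻`, which satisfy
condition (A). Conversely every admissible partition is realised by explicit weights, and the face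
determines the partition.
-/

def IsStable {n : ℕ} (G : SimpleGraph (Fin n)) (I : Finset (Fin n)) : Prop :=
  ∀ ⦃a⦄, a ∈ I → ∀ ⦃b⦄, b ∈ I → ¬ G.Adj a b

/-- The point `e_0 + ∑_{i ∈ I} e_i ∈ ℝ^{n+1}`. -/
def hansenVert {n : ℕ} (I : Finset (Fin n)) : Fin (n + 1) → ℝ :=
  fun j => Fin.cases 1 (fun i => if i ∈ I then 1 else 0) j

def hansenPolytope {n : ℕ} (G : SimpleGraph (Fin n)) : Set (Fin (n + 1) → ℝ) :=
  convexHull ℝ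
    {x | ∃ I : Finset (Fin n), IsStable G I ∧ (x = hansenVert I ∨ x = -hansenVert I)}

/-- The face `[ε, K] = { x ∈ H(G) : ε·(−x_0 + 2·∑_{i ∈ K} x_i) = 1 }` of the Hansen
polytope, for a sign `ε` and a clique `K`. -/
def hFace {n : ℕ} (G : SimpleGraph (Fin n)) (ε : ℝ) (K : Finset (Fin n)) :
    Set (Fin (n + 1) → ℝ) :=
  {x ∈ hansenPolytope G | ε * (-(x 0) + 2 * (∑ i ∈ K, x i.succ)) = 1}

open Finset

noncomputable section

theorem IsExposed.eq_convexHull_inter {E : Type*} [AddCommGroup E] [Module ℝ E]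
    [TopologicalSpace E] [T2Space E] [IsTopologicalAddGroup E] [ContinuousSMul ℝ E]
    [LocallyConvexSpace ℝ E] {V F : Set E} (hV : V.Finite)
    (hF : IsExposed ℝ (convexHull ℝ V) F) : F = convexHull ℝ (F ∩ V) := by
  have hFconv : Convex ℝ F := hF.convex (convex_convexHull ℝ V)
  refine subset_antisymm ?_ (convexHull_min Set.inter_subset_left hFconv)
  have hext : F.extremePoints ℝ ⊆ F ∩ V := by
    rw [hF.isExtreme.extremePoints_eq]
    exact Set.inter_subset_inter_right _ extremePoints_convexHull_subset
  calc F = closure (convexHull ℝ (F.extremePoints ℝ)) :=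
        (closure_convexHull_extremePoints (hF.isCompact (hV.isCompact_convexHull ℝ)) hFconv).symm
    _ ⊆ convexHull ℝ (F ∩ V) :=
        closure_minimal (convexHull_mono hext)
          ((hV.subset Set.inter_subset_right).isClosed_convexHull ℝ)

namespace Finset

variable {ι : Type*} {w : ι → ℝ} {X T : Finset ι}

def posSet (T : Finset ι) (w : ι → ℝ) : Finset ι := {i ∈ T | 0 < w i}

def posSum (T : Finset ι) (w : ι → ℝ) : ℝ := ∑ i ∈ posSet T w, w i

theorem posSum_nonneg : 0 ≤ posSum T w :=
  sum_nonneg fun _ hi => (mem_filter.1 hi).2.le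

theorem posSum_eq_zero_iff : posSum T w = 0 ↔ posSet T w = ∅ := by
  rw [posSum, sum_eq_zero_iff_of_nonneg fun _ hi => (mem_filter.1 hi).2.le,
    eq_empty_iff_forall_notMem]
  exact forall_congr' fun i => ⟨fun h hi => (mem_filter.1 hi).2.ne' (h hi), fun h hi => absurd hi h⟩

theorem posSum_filter_add_posSum_filter_not (p : ι → Prop) [DecidablePred p] :
    posSum {i ∈ T | p i} w + posSum {i ∈ T | ¬ p i} w = posSum T w := by
  simp only [posSum, posSet]
  rw [filter_comm, filter_comm (p := fun i => ¬ p i), sum_filter_add_sum_filter_not]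

theorem posSet_filter (p : ι → Prop) [DecidablePred p] :
    posSet {i ∈ T | p i} w = {i ∈ posSet T w | p i} :=
  filter_comm _ _ _

variable [DecidableEq ι]

theorem posSum_sub_sum :
    posSum T w - ∑ i ∈ X, w i = ∑ i ∈ posSet T w \ X, w i + ∑ i ∈ X \ posSet T w, -w i := by
  rw [posSum, ← sum_sdiff_sub_sum_sdiff, sum_neg_distrib, sub_eq_add_neg]

theorem posSum_sub_sum_terms_nonneg (h : X ⊆ T) :
    (∀ i ∈ posSet T w \ X, 0 ≤ w i) ∧ ∀ i ∈ X \ posSet T w, 0 ≤ -w i := by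
  refine ⟨fun i hi => (mem_filter.1 (mem_sdiff.1 hi).1).2.le, fun i hi => ?_⟩
  simp only [mem_sdiff, posSet, mem_filter, not_and, not_lt] at hi
  exact neg_nonneg.2 (hi.2 (h hi.1))

theorem sum_le_posSum (h : X ⊆ T) : ∑ i ∈ X, w i ≤ posSum T w := by
  obtain ⟨h₁, h₂⟩ := posSum_sub_sum_terms_nonneg (w := w) h
  linarith [posSum_sub_sum (w := w) (X := X) (T := T), sum_nonneg h₁, sum_nonneg h₂]

theorem sum_eq_posSum_iff (h : X ⊆ T) :
    ∑ i ∈ X, w i = posSum T w ↔ (∀ i ∈ X, 0 ≤ w i) ∧ posSet T w ⊆ X := by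
  obtain ⟨h₁, h₂⟩ := posSum_sub_sum_terms_nonneg (w := w) h
  rw [eq_comm, ← sub_eq_zero, posSum_sub_sum, add_eq_zero_iff_of_nonneg (sum_nonneg h₁)
    (sum_nonneg h₂), sum_eq_zero_iff_of_nonneg h₁, sum_eq_zero_iff_of_nonneg h₂]
  simp only [mem_sdiff, posSet, mem_filter, not_and, not_lt, neg_eq_zero, and_imp]
  constructor
  · rintro ⟨hpos, hX⟩
    refine ⟨fun i hi => ?_, fun i hi => ?_⟩
    · by_cases hwi : 0 < w i
      · exact hwi.le
      · exact (hX i hi fun _ => le_of_not_gt hwi).ge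
    · rw [mem_filter] at hi
      by_contra hiX
      exact (hpos i hi.1 hi.2 hiX).not_gt hi.2
  · rintro ⟨hX, hsub⟩
    exact ⟨fun i hiT hwi hiX => absurd (hsub (mem_filter.2 ⟨hiT, hwi⟩)) hiX,
      fun i hi hwi => le_antisymm (hwi (h hi)) (hX i hi)⟩

end Finset

section IsStable

variable {n : ℕ} {G : SimpleGraph (Fin n)} {C I J : Finset (Fin n)}

theorem IsStable.mono (hI : IsStable G I) (hJI : J ⊆ I) : IsStable G J :=
  fun _ ha _ hb => hI (hJI ha) (hJI hb)

theorem IsStable.insert {x : Fin n} (hI : IsStable G I) (hx : ∀ s ∈ I, ¬ G.Adj x s) :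
    IsStable G (insert x I) := by
  intro a ha b hb
  rw [mem_insert] at ha hb
  rcases ha with rfl | ha <;> rcases hb with rfl | hb
  exacts [G.irrefl, hx b hb, fun h => hx a ha h.symm, hI ha hb]

theorem IsStable.card_inter_le_one (hI : IsStable G I) (hC : G.IsClique (C : Set (Fin n))) :
    #(I ∩ C) ≤ 1 :=
  card_le_one.2 fun _ hx _ hy => by_contra fun hxy =>
    hI (mem_inter.1 hx).1 (mem_inter.1 hy).1 (hC (mem_inter.1 hx).2 (mem_inter.1 hy).2 hxy)

end IsStable

namespace Hansen

open scoped Classical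

variable {n : ℕ} {G : SimpleGraph (Fin n)} {C S I J : Finset (Fin n)}

def vertexValue (a : ℝ) (w : Fin n → ℝ) (I : Finset (Fin n)) : ℝ := a + ∑ i ∈ I, w i

theorem neg_vertexValue (a : ℝ) (w : Fin n → ℝ) : -vertexValue a w = vertexValue (-a) (-w) := by
  ext I
  simp [vertexValue, sum_neg_distrib, add_comm]

variable (G) in
def topSets (φ : Finset (Fin n) → ℝ) : Set (Finset (Fin n)) :=
  {I | IsStable G I ∧ ∀ J, IsStable G J → |φ J| ≤ φ I}

def hansenFunctional (a : ℝ) (w : Fin n → ℝ) : StrongDual ℝ (Fin (n + 1) → ℝ) :=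
  ∑ j, (Fin.cons a w : Fin (n + 1) → ℝ) j • ContinuousLinearMap.proj j

theorem hansenFunctional_apply (a : ℝ) (w : Fin n → ℝ) (x : Fin (n + 1) → ℝ) :
    hansenFunctional a w x = a * x 0 + ∑ i, w i * x i.succ := by
  simp [hansenFunctional, Fin.sum_univ_succ]

theorem hansenFunctional_hansenVert (a : ℝ) (w : Fin n → ℝ) (I : Finset (Fin n)) :
    hansenFunctional a w (hansenVert I) = vertexValue a w I := by
  simp [hansenFunctional_apply, hansenVert, vertexValue, Finset.sum_ite_mem]

theorem exists_eq_hansenFunctional (l : StrongDual ℝ (Fin (n + 1) → ℝ)) :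
    ∃ a w, l = hansenFunctional a w := by
  refine ⟨l (Pi.single 0 1), fun i => l (Pi.single i.succ 1), ?_⟩
  apply ContinuousLinearMap.coe_injective
  ext j
  refine Fin.cases ?_ (fun i => ?_) j <;> simp [hansenFunctional_apply, Pi.single_apply]

variable (G) in
def hansenVerts : Set (Fin (n + 1) → ℝ) :=
  {x | ∃ I : Finset (Fin n), IsStable G I ∧ (x = hansenVert I ∨ x = -hansenVert I)}

variable (G) in
theorem hansenVerts_finite : (hansenVerts G).Finite :=
  ((Set.finite_range hansenVert).union (Set.finite_range fun I => -hansenVert I)).subset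
    (by rintro x ⟨I, -, rfl | rfl⟩ <;> simp)

variable (G) in
def hansenFace (a : ℝ) (w : Fin n → ℝ) : Set (Fin (n + 1) → ℝ) :=
  (hansenFunctional a w).toExposed (hansenPolytope G)

theorem hansenVert_mem_hansenPolytope {I : Finset (Fin n)} (hI : IsStable G I) :
    hansenVert I ∈ hansenPolytope G :=
  subset_convexHull ℝ _ ⟨I, hI, Or.inl rfl⟩

theorem neg_hansenVert_mem_hansenPolytope {I : Finset (Fin n)} (hI : IsStable G I) :
    -hansenVert I ∈ hansenPolytope G :=
  subset_convexHull ℝ _ ⟨I, hI, Or.inr rfl⟩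

theorem forall_mem_hansenPolytope_le_iff {l : StrongDual ℝ (Fin (n + 1) → ℝ)} {r : ℝ} :
    (∀ y ∈ hansenPolytope G, l y ≤ r) ↔ ∀ J, IsStable G J → |l (hansenVert J)| ≤ r := by
  constructor
  · intro h J hJ
    rw [abs_le, neg_le, ← map_neg]
    exact ⟨h _ (neg_hansenVert_mem_hansenPolytope hJ), h _ (hansenVert_mem_hansenPolytope hJ)⟩
  · intro h y hy
    refine convexHull_min ?_ (convex_halfSpace_le l.isLinear r) hy
    rintro x ⟨J, hJ, rfl | rfl⟩
    · exact (le_abs_self _).trans (h J hJ)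
    · rw [Set.mem_ofPred_eq, map_neg]
      exact (neg_le_abs _).trans (h J hJ)

theorem hansenVert_mem_hansenFace_iff {a : ℝ} {w : Fin n → ℝ} {I : Finset (Fin n)}
    (hI : IsStable G I) : hansenVert I ∈ hansenFace G a w ↔ I ∈ topSets G (vertexValue a w) := by
  simp only [hansenFace, ContinuousLinearMap.toExposed, Set.mem_ofPred_eq,
    forall_mem_hansenPolytope_le_iff,
    hansenFunctional_hansenVert]
  exact and_congr (iff_of_true (hansenVert_mem_hansenPolytope hI) hI) Iff.rfl

theorem neg_hansenVert_mem_hansenFace_iff {a : ℝ} {w : Fin n → ℝ} {I : Finset (Fin n)}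
    (hI : IsStable G I) :
    -hansenVert I ∈ hansenFace G a w ↔ I ∈ topSets G (vertexValue (-a) (-w)) := by
  simp only [hansenFace, ContinuousLinearMap.toExposed, Set.mem_ofPred_eq,
    forall_mem_hansenPolytope_le_iff,
    map_neg, hansenFunctional_hansenVert, topSets, ← neg_vertexValue, Pi.neg_apply, abs_neg]
  exact and_congr (iff_of_true (neg_hansenVert_mem_hansenPolytope hI) hI) Iff.rfl

theorem topSets_eq_setOf_hansenVert_mem (a : ℝ) (w : Fin n → ℝ) :
    topSets G (vertexValue a w) = {I | IsStable G I ∧ hansenVert I ∈ hansenFace G a w} :=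
  Set.ext fun _ => ⟨fun h => ⟨h.1, (hansenVert_mem_hansenFace_iff h.1).2 h⟩,
    fun h => (hansenVert_mem_hansenFace_iff h.1).1 h.2⟩

theorem topSets_neg_eq_setOf_neg_hansenVert_mem (a : ℝ) (w : Fin n → ℝ) :
    topSets G (vertexValue (-a) (-w)) = {I | IsStable G I ∧ -hansenVert I ∈ hansenFace G a w} :=
  Set.ext fun _ => ⟨fun h => ⟨h.1, (neg_hansenVert_mem_hansenFace_iff h.1).2 h⟩,
    fun h => (neg_hansenVert_mem_hansenFace_iff h.1).1 h.2⟩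

theorem hansenFace_eq_convexHull (a : ℝ) (w : Fin n → ℝ) :
    hansenFace G a w = convexHull ℝ (hansenFace G a w ∩ hansenVerts G) :=
  (ContinuousLinearMap.toExposed.isExposed).eq_convexHull_inter (hansenVerts_finite G)

theorem hansenFace_eq_iff {a a' : ℝ} {w w' : Fin n → ℝ} :
    hansenFace G a w = hansenFace G a' w' ↔
      topSets G (vertexValue a w) = topSets G (vertexValue a' w') ∧
        topSets G (vertexValue (-a) (-w)) = topSets G (vertexValue (-a') (-w')) := by
  rw [topSets_neg_eq_setOf_neg_hansenVert_mem, topSets_neg_eq_setOf_neg_hansenVert_mem,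
    topSets_eq_setOf_hansenVert_mem, topSets_eq_setOf_hansenVert_mem]
  refine ⟨fun h => by rw [h]; exact ⟨rfl, rfl⟩, fun ⟨hpos, hneg⟩ => ?_⟩
  rw [hansenFace_eq_convexHull, hansenFace_eq_convexHull (a := a')]
  congr 1
  ext x
  simp only [Set.mem_inter_iff, and_congr_left_iff]
  rintro ⟨I, hI, rfl | rfl⟩
  · simpa [hI] using Set.ext_iff.mp hpos I
  · simpa [hI] using Set.ext_iff.mp hneg I

theorem hansenVert_zero (I : Finset (Fin n)) : hansenVert I 0 = 1 := rfl

theorem sum_hansenVert_succ (I B : Finset (Fin n)) :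
    ∑ i ∈ B, hansenVert I i.succ = #(I ∩ B) := by
  simp [hansenVert, inter_comm]

theorem convex_hFace (ε : ℝ) (B : Finset (Fin n)) : Convex ℝ (hFace G ε B) :=
  (convex_convexHull ℝ _).inter <| convex_hyperplane
    ⟨fun x y => by simp only [Pi.add_apply, sum_add_distrib]; ring,
      fun c x => by simp only [Pi.smul_apply, smul_eq_mul, ← mul_sum]; ring⟩ 1

theorem hansenFace_subset_hFace_iff {a : ℝ} {w : Fin n → ℝ} {ε : ℝ} {B : Finset (Fin n)} :
    hansenFace G a w ⊆ hFace G ε B ↔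
      (∀ I ∈ topSets G (vertexValue a w), ε * (2 * #(I ∩ B) - 1) = 1) ∧
        ∀ I ∈ topSets G (vertexValue (-a) (-w)), ε * (1 - 2 * #(I ∩ B)) = 1 := by
  have hval : ∀ I, IsStable G I → (hansenVert I ∈ hFace G ε B ↔ ε * (2 * #(I ∩ B) - 1) = 1) ∧
      (-hansenVert I ∈ hFace G ε B ↔ ε * (1 - 2 * #(I ∩ B)) = 1) := fun I hI => by
    simp only [hFace, Set.mem_ofPred_eq, hansenVert_mem_hansenPolytope hI,
      neg_hansenVert_mem_hansenPolytope hI, true_and, Pi.neg_apply, sum_neg_distrib,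
      hansenVert_zero, sum_hansenVert_succ]
    constructor <;> ring_nf
  constructor
  · intro h
    exact ⟨fun I hI => (hval I hI.1).1.1 (h ((hansenVert_mem_hansenFace_iff hI.1).2 hI)),
      fun I hI => (hval I hI.1).2.1 (h ((neg_hansenVert_mem_hansenFace_iff hI.1).2 hI))⟩
  · rintro ⟨hpos, hneg⟩
    rw [hansenFace_eq_convexHull]
    refine convexHull_min ?_ (convex_hFace ε B)
    rintro x ⟨hxF, I, hI, rfl | rfl⟩
    · exact (hval I hI).1.2 (hpos I ((hansenVert_mem_hansenFace_iff hI).1 hxF))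
    · exact (hval I hI).2.2 (hneg I ((neg_hansenVert_mem_hansenFace_iff hI).1 hxF))

structure IsSplitPartition (G : SimpleGraph (Fin n)) (C S : Finset (Fin n)) : Prop where
  disjoint : Disjoint C S
  union_eq : C ∪ S = univ
  isClique : G.IsClique (C : Set (Fin n))
  isStable : IsStable G S

theorem IsSplitPartition.mem_of_notMem (hG : IsSplitPartition G C S) {x : Fin n} (hx : x ∉ C) :
    x ∈ S :=
  (mem_union.1 (hG.union_eq ▸ mem_univ x)).resolve_left hx

theorem IsSplitPartition.sdiff_eq (hG : IsSplitPartition G C S) (I : Finset (Fin n)) :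
    I \ C = I ∩ S := by
  ext x
  simp only [mem_sdiff, mem_inter]
  exact and_congr_right fun _ => ⟨hG.mem_of_notMem,
    fun hxS hxC => disjoint_left.1 hG.disjoint hxC hxS⟩

variable (G C S) in
def good (w : Fin n → ℝ) : Finset (Fin n) := {x ∈ C | w x = posSum {s ∈ S | G.Adj x s} w}

variable (G C) in
def pattern (P N K : Finset (Fin n)) : Set (Finset (Fin n)) :=
  {I | IsStable G I ∧ (∀ s ∈ I, s ∉ N) ∧ (∀ s ∈ P, (∀ x ∈ I ∩ C, ¬ G.Adj x s) → s ∈ I) ∧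
    I ∩ C ⊆ K}

variable (G C S) in
/-- The weights of the functionals exposing primitive faces. -/
def Balanced (a : ℝ) (w : Fin n → ℝ) : Prop :=
  a + posSum S w = -a + posSum S (-w) ∧
    ∀ x ∈ C, w x ≤ posSum {s ∈ S | G.Adj x s} w ∧ -w x ≤ posSum {s ∈ S | G.Adj x s} (-w)

theorem Balanced.neg {a : ℝ} {w : Fin n → ℝ} (h : Balanced G C S a w) :
    Balanced G C S (-a) (-w) := by
  simp only [Balanced, neg_neg, Pi.neg_apply] at h ⊢
  exact ⟨h.1.symm, fun x hx => (h.2 x hx).symm⟩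

theorem sum_le_of_isStable (hG : IsSplitPartition G C S) (w : Fin n → ℝ) (hI : IsStable G I) :
    ∑ i ∈ I, w i ≤ ∑ i ∈ I ∩ C, w i + posSum {s ∈ S | ∀ x ∈ I ∩ C, ¬ G.Adj x s} w ∧
      (∑ i ∈ I, w i = ∑ i ∈ I ∩ C, w i + posSum {s ∈ S | ∀ x ∈ I ∩ C, ¬ G.Adj x s} w ↔
        (∀ s ∈ I, s ∉ posSet S (-w)) ∧
          ∀ s ∈ posSet S w, (∀ x ∈ I ∩ C, ¬ G.Adj x s) → s ∈ I) := by
  have hsub : I ∩ S ⊆ {s ∈ S | ∀ x ∈ I ∩ C, ¬ G.Adj x s} := fun s hs => by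
    rw [mem_inter] at hs
    exact mem_filter.2 ⟨hs.2, fun x hx => hI (mem_inter.1 hx).1 hs.1⟩
  rw [← sum_inter_add_sum_sdiff I C, hG.sdiff_eq, add_le_add_iff_left, add_right_inj,
    sum_eq_posSum_iff hsub]
  refine ⟨sum_le_posSum hsub, and_congr ?_ ?_⟩
  · simp only [mem_inter, posSet, mem_filter, Pi.neg_apply, neg_pos, not_and, not_lt, and_imp]
  · simp only [subset_iff, posSet, mem_filter, mem_inter, and_imp]
    exact ⟨fun h s hsS hw hna => (h hsS hna hw).1, fun h s hsS hna hw => ⟨h s hsS hw hna, hsS⟩⟩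

theorem sum_add_posSum_le (w : Fin n → ℝ) {X : Finset (Fin n)} (hXC : X ⊆ C) (hX : #X ≤ 1)
    (hw : ∀ x ∈ C, w x ≤ posSum {s ∈ S | G.Adj x s} w) :
    ∑ i ∈ X, w i + posSum {s ∈ S | ∀ x ∈ X, ¬ G.Adj x s} w ≤ posSum S w ∧
      (∑ i ∈ X, w i + posSum {s ∈ S | ∀ x ∈ X, ¬ G.Adj x s} w = posSum S w ↔
        X ⊆ good G C S w) := by
  rcases Nat.le_one_iff_eq_zero_or_eq_one.1 hX with hX | hX
  · simp [card_eq_zero.1 hX]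
  obtain ⟨x, rfl⟩ := card_eq_one.1 hX
  have hxC : x ∈ C := hXC (mem_singleton_self x)
  have hsplit := posSum_filter_add_posSum_filter_not (T := S) (w := w) (G.Adj x)
  simp only [sum_singleton, mem_singleton, forall_eq, singleton_subset_iff, good, mem_filter,
    hxC, true_and]
  exact ⟨by linarith [hw x hxC], by constructor <;> intro h <;> linarith⟩

theorem vertexValue_le_of_isStable (hG : IsSplitPartition G C S) (a : ℝ) (w : Fin n → ℝ)
    (hw : ∀ x ∈ C, w x ≤ posSum {s ∈ S | G.Adj x s} w) (hI : IsStable G I) :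
    vertexValue a w I ≤ a + posSum S w ∧
      (vertexValue a w I = a + posSum S w ↔
        I ∈ pattern G C (posSet S w) (posSet S (-w)) (good G C S w)) := by
  obtain ⟨hle₁, heq₁⟩ := sum_le_of_isStable hG w hI
  obtain ⟨hle₂, heq₂⟩ := sum_add_posSum_le (S := S) w inter_subset_right
    (hI.card_inter_le_one hG.isClique) hw
  refine ⟨by rw [vertexValue]; linarith, ?_⟩
  rw [vertexValue, add_right_inj, pattern, Set.mem_ofPred_eq, ← heq₂, and_iff_right hI,
    ← and_assoc, ← heq₁]
  constructor
  · intro h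
    exact ⟨by linarith, by linarith⟩
  · rintro ⟨h₁, h₂⟩
    rw [h₁, h₂]

theorem Balanced.topSets_eq (hG : IsSplitPartition G C S) {a : ℝ} {w : Fin n → ℝ}
    (hb : Balanced G C S a w) :
    topSets G (vertexValue a w) = pattern G C (posSet S w) (posSet S (-w)) (good G C S w) := by
  have hval := fun J (hJ : IsStable G J) =>
    vertexValue_le_of_isStable hG a w (fun x hx => (hb.2 x hx).1) hJ
  have habs : ∀ J, IsStable G J → |vertexValue a w J| ≤ a + posSum S w := fun J hJ => by
    have h₁ := (hval J hJ).1
    have h₂ := (vertexValue_le_of_isStable hG (-a) (-w) (fun x hx => (hb.2 x hx).2) hJ).1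
    rw [← neg_vertexValue, Pi.neg_apply, ← hb.1] at h₂
    exact abs_le.2 ⟨by linarith, h₁⟩
  have hpos : IsStable G (posSet S w) := hG.isStable.mono (filter_subset _ _)
  ext I
  refine ⟨fun hI => (hval I hI.1).2.1 (le_antisymm (hval I hI.1).1 ?_), fun hI => ?_⟩
  · exact (le_abs_self _).trans (hI.2 _ hpos)
  · exact ⟨hI.1, fun J hJ => ((hval I hI.1).2.2 hI).symm ▸ habs J hJ⟩

theorem vertexValue_eq_add_of_mem (a : ℝ) (w : Fin n → ℝ) {x : Fin n} (hx : x ∈ I) :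
    vertexValue a w I = vertexValue a w (I.erase x) + w x := by
  rw [vertexValue, vertexValue, ← add_sum_erase I w hx]
  ring

/-- If every set in `topSets` meets `C`, its clique vertex lies in no set of the negated
`topSets`: otherwise that vertex would have weight zero, and removing it would leave a set of
`topSets` inside `S`. -/
theorem exists_separating (hG : IsSplitPartition G C S) (a : ℝ) (w : Fin n → ℝ)
    (h : ∀ I ∈ topSets G (vertexValue a w), ¬ I ⊆ S) :
    ∃ B ⊆ C, (∀ I ∈ topSets G (vertexValue a w), #(I ∩ B) = 1) ∧
      ∀ J ∈ topSets G (vertexValue (-a) (-w)), J ∩ B = ∅ := by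
  refine ⟨{x ∈ C | ∀ J ∈ topSets G (vertexValue (-a) (-w)), x ∉ J}, filter_subset _ _,
    fun I hI => ?_, fun J hJ => eq_empty_of_forall_notMem fun x hx =>
      (mem_filter.1 (mem_inter.1 hx).2).2 J hJ (mem_inter.1 hx).1⟩
  obtain ⟨x, hxI, hxS⟩ := not_subset.1 (h I hI)
  have hxC : x ∈ C := by_contra fun hxC => hxS (hG.mem_of_notMem hxC)
  have hIC : ∀ y ∈ I, y ∈ C → y = x := fun y hy hyC =>
    card_le_one.1 (hI.1.card_inter_le_one hG.isClique) y (mem_inter.2 ⟨hy, hyC⟩) x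
      (mem_inter.2 ⟨hxI, hxC⟩)
  have hxB : ∀ J ∈ topSets G (vertexValue (-a) (-w)), x ∉ J := by
    intro J hJ hxJ
    have hI' := vertexValue_eq_add_of_mem a w hxI
    have hJ' := vertexValue_eq_add_of_mem (-a) (-w) hxJ
    have h₁ := (le_abs_self _).trans (hI.2 _ (hI.1.mono (erase_subset x I)))
    have h₂ := (le_abs_self _).trans (hJ.2 _ (hJ.1.mono (erase_subset x J)))
    rw [Pi.neg_apply] at hJ'
    refine h (I.erase x) ⟨hI.1.mono (erase_subset x I), fun K hK => ?_⟩ fun y hy => ?_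
    · linarith [hI.2 K hK]
    · rw [mem_erase] at hy
      exact hG.mem_of_notMem fun hyC => hy.1 (hIC y hy.2 hyC)
  refine card_eq_one.2 ⟨x, eq_singleton_iff_unique_mem.2 ⟨mem_inter.2 ⟨hxI, ?_⟩, ?_⟩⟩
  · exact mem_filter.2 ⟨hxC, hxB⟩
  · exact fun y hy => hIC y (mem_inter.1 hy).1 (mem_filter.1 (mem_inter.1 hy).2).1

theorem vertexValue_eq_of_mem_topSets (hS : IsStable G S) {a : ℝ} {w : Fin n → ℝ}
    (hI : I ∈ topSets G (vertexValue a w)) (hIS : I ⊆ S) :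
    vertexValue a w I = a + posSum S w :=
  le_antisymm (add_le_add_right (sum_le_posSum hIS) a)
    ((le_abs_self _).trans (hI.2 (posSet S w) (hS.mono (filter_subset _ _))))

theorem le_posSum_of_mem_topSets (hG : IsSplitPartition G C S) {a : ℝ} {w : Fin n → ℝ}
    (hI : I ∈ topSets G (vertexValue a w)) (hIS : I ⊆ S) {x : Fin n} (hx : x ∈ C) :
    w x ≤ posSum {s ∈ S | G.Adj x s} w := by
  have hsub : posSet {s ∈ S | ¬ G.Adj x s} w ⊆ S := (filter_subset _ _).trans (filter_subset _ _)
  have hxK : x ∉ posSet {s ∈ S | ¬ G.Adj x s} w := fun h => disjoint_left.1 hG.disjoint hx (hsub h)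
  have hK : IsStable G (insert x (posSet {s ∈ S | ¬ G.Adj x s} w)) :=
    (hG.isStable.mono hsub).insert fun s hs => (mem_filter.1 (mem_filter.1 hs).1).2
  have hval : vertexValue a w (insert x (posSet {s ∈ S | ¬ G.Adj x s} w)) =
      a + w x + posSum {s ∈ S | ¬ G.Adj x s} w := by
    rw [vertexValue, sum_insert hxK, posSum, add_assoc]
  have hle := (le_abs_self _).trans (hI.2 _ hK)
  rw [hval, vertexValue_eq_of_mem_topSets hG.isStable hI hIS] at hle
  linarith [posSum_filter_add_posSum_filter_not (T := S) (w := w) (G.Adj x)]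

theorem vertexValue_eq_of_mem_topSets_neg {a : ℝ} {w : Fin n → ℝ}
    (hI : I ∈ topSets G (vertexValue a w)) (hJ : J ∈ topSets G (vertexValue (-a) (-w))) :
    vertexValue a w I = vertexValue (-a) (-w) J := by
  have h₁ := hI.2 J hJ.1
  have h₂ := hJ.2 I hI.1
  simp only [← neg_vertexValue, Pi.neg_apply, abs_neg] at h₂ ⊢
  linarith [le_abs_self (vertexValue a w I), neg_abs_le (vertexValue a w J)]

theorem balanced_of_mem_topSets (hG : IsSplitPartition G C S) {a : ℝ} {w : Fin n → ℝ}
    (hI : I ∈ topSets G (vertexValue a w)) (hIS : I ⊆ S)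
    (hJ : J ∈ topSets G (vertexValue (-a) (-w))) (hJS : J ⊆ S) : Balanced G C S a w := by
  refine ⟨?_, fun x hx => ⟨le_posSum_of_mem_topSets hG hI hIS hx,
    le_posSum_of_mem_topSets hG hJ hJS hx⟩⟩
  rw [← vertexValue_eq_of_mem_topSets hG.isStable hI hIS,
    ← vertexValue_eq_of_mem_topSets hG.isStable hJ hJS]
  exact vertexValue_eq_of_mem_topSets_neg hI hJ

theorem isPrimitive_hansenFace_iff (hG : IsSplitPartition G C S) {a : ℝ} {w : Fin n → ℝ} :
    (∀ ε : ℝ, (ε = 1 ∨ ε = -1) → ∀ B ⊆ C, ¬ hansenFace G a w ⊆ hFace G ε B) ↔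
      (∃ I ∈ topSets G (vertexValue a w), I ⊆ S) ∧
        ∃ J ∈ topSets G (vertexValue (-a) (-w)), J ⊆ S := by
  constructor
  · intro h
    constructor
    · by_contra! hS
      obtain ⟨B, hBC, h₁, h₂⟩ := exists_separating hG a w hS
      refine h 1 (Or.inl rfl) B hBC
        (hansenFace_subset_hFace_iff.2 ⟨fun I hI => ?_, fun J hJ => ?_⟩)
      · rw [h₁ I hI]; norm_num
      · rw [h₂ J hJ]; norm_num
    · by_contra! hS
      obtain ⟨B, hBC, h₁, h₂⟩ := exists_separating hG (-a) (-w) hS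
      rw [neg_neg, neg_neg] at h₂
      refine h (-1) (Or.inr rfl) B hBC
        (hansenFace_subset_hFace_iff.2 ⟨fun I hI => ?_, fun J hJ => ?_⟩)
      · rw [h₂ I hI]; norm_num
      · rw [h₁ J hJ]; norm_num
  · rintro ⟨⟨I, hI, hIS⟩, J, hJ, hJS⟩ ε - B hB hsub
    obtain ⟨h₁, h₂⟩ := hansenFace_subset_hFace_iff.1 hsub
    have h₁ := h₁ I hI
    have h₂ := h₂ J hJ
    rw [disjoint_iff_inter_eq_empty.1 (hG.disjoint.symm.mono hIS hB), card_empty] at h₁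
    rw [disjoint_iff_inter_eq_empty.1 (hG.disjoint.symm.mono hJS hB), card_empty] at h₂
    norm_num at h₁ h₂
    linarith

/-- `(C⁺, C⁻, S⁺, S⁻)`; `C⁰` and `S⁰` are the complements in `C` and `S`. -/
abbrev Quadruple (n : ℕ) := Finset (Fin n) × Finset (Fin n) × Finset (Fin n) × Finset (Fin n)

variable {q : Quadruple n}

variable (G C S) in
def Admissible (q : Quadruple n) : Prop :=
  q.1 ⊆ C ∧ q.2.1 ⊆ C ∧ Disjoint q.1 q.2.1 ∧
    q.2.2.1 ⊆ S ∧ q.2.2.2 ⊆ S ∧ Disjoint q.2.2.1 q.2.2.2 ∧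
      ∀ c ∈ q.1 ∪ q.2.1, ∃ s ∈ q.2.2.1 ∪ q.2.2.2, G.Adj c s

def Quadruple.swap (q : Quadruple n) : Quadruple n := (q.2.1, q.1, q.2.2.2, q.2.2.1)

theorem Admissible.swap (hq : Admissible G C S q) : Admissible G C S q.swap := by
  obtain ⟨h₁, h₂, h₃, h₄, h₅, h₆, h₇⟩ := hq
  refine ⟨h₂, h₁, h₃.symm, h₅, h₄, h₆.symm, fun c hc => ?_⟩
  obtain ⟨s, hs, hcs⟩ := h₇ c (by rw [union_comm]; exact hc)
  exact ⟨s, by rw [Quadruple.swap, union_comm]; exact hs, hcs⟩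

variable (G) in
def nbrCount (X : Finset (Fin n)) (x : Fin n) : ℝ := #{s ∈ X | G.Adj x s}

theorem nbrCount_nonneg (X : Finset (Fin n)) (x : Fin n) : 0 ≤ nbrCount G X x := Nat.cast_nonneg _

theorem nbrCount_add_eq_zero_iff {P N : Finset (Fin n)} {x : Fin n} :
    nbrCount G P x + nbrCount G N x = 0 ↔ ∀ s ∈ P ∪ N, ¬ G.Adj x s := by
  rw [add_eq_zero_iff_of_nonneg (nbrCount_nonneg P x) (nbrCount_nonneg N x)]
  simp only [nbrCount, Nat.cast_eq_zero, card_eq_zero, filter_eq_empty_iff, mem_union]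
  exact ⟨fun h s hs => hs.elim (fun hs => h.1 hs) (fun hs => h.2 hs),
    fun h => ⟨fun s hs => h s (Or.inl hs), fun s hs => h s (Or.inr hs)⟩⟩

variable (G C) in
/-- On `C⁺`, `C⁻` and `C⁰` this is `2p`, `-2m` and `p - m`, where `p` and `m` count the
neighbours in `S⁺` and `S⁻`: the positive (negative) weight `2p` (`-2m`) of the neighbourhood is
matched exactly on `C⁺` (`C⁻`), and on `C⁰` only when `p = m = 0`. -/
def partitionWeight (q : Quadruple n) (i : Fin n) : ℝ :=
  if i ∈ C then
    nbrCount G q.2.2.1 i - nbrCount G q.2.2.2 i +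
      ((if i ∈ q.1 then 1 else 0) - (if i ∈ q.2.1 then 1 else 0)) *
        (nbrCount G q.2.2.1 i + nbrCount G q.2.2.2 i)
  else (if i ∈ q.2.2.1 then 2 else 0) - (if i ∈ q.2.2.2 then 2 else 0)

def partitionConst (q : Quadruple n) : ℝ := #q.2.2.2 - #q.2.2.1

variable (G C) in
def partitionFace (q : Quadruple n) : Set (Fin (n + 1) → ℝ) :=
  hansenFace G (partitionConst q) (partitionWeight G C q)

theorem partitionWeight_swap : partitionWeight G C q.swap = -partitionWeight G C q := by
  obtain ⟨Cp, Cm, SP, SM⟩ := q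
  ext i
  dsimp only [partitionWeight, Quadruple.swap, Pi.neg_apply]
  split_ifs <;> ring

theorem partitionConst_swap : partitionConst q.swap = -partitionConst q := by
  simp only [partitionConst, Quadruple.swap]
  ring

theorem posSet_partitionWeight (hCS : Disjoint C S) (hq : Admissible G C S q) :
    posSet S (partitionWeight G C q) = q.2.2.1 := by
  ext s
  simp only [posSet, mem_filter]
  constructor
  · rintro ⟨hs, hpos⟩
    simp only [partitionWeight, if_neg (disjoint_right.1 hCS hs)] at hpos
    split_ifs at hpos with h₁ <;> first | exact h₁ | linarith
  · intro hs
    have hsm : s ∉ q.2.2.2 := disjoint_left.1 hq.2.2.2.2.2.1 hs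
    refine ⟨hq.2.2.2.1 hs, ?_⟩
    simp only [partitionWeight, if_neg (disjoint_right.1 hCS (hq.2.2.2.1 hs)), if_pos hs,
      if_neg hsm]
    norm_num

theorem posSum_filter_partitionWeight (hCS : Disjoint C S) (hq : Admissible G C S q)
    (p : Fin n → Prop) [DecidablePred p] :
    posSum {s ∈ S | p s} (partitionWeight G C q) = 2 * #{s ∈ q.2.2.1 | p s} := by
  rw [posSum, posSet_filter, posSet_partitionWeight hCS hq, sum_congr rfl fun s hs => ?_,
    sum_const, nsmul_eq_mul, mul_comm]
  have hs := (mem_filter.1 hs).1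
  simp only [partitionWeight, if_neg (disjoint_right.1 hCS (hq.2.2.2.1 hs)), if_pos hs,
    if_neg (disjoint_left.1 hq.2.2.2.2.2.1 hs), sub_zero]

theorem posSum_partitionWeight (hCS : Disjoint C S) (hq : Admissible G C S q) :
    posSum S (partitionWeight G C q) = 2 * #q.2.2.1 := by
  simpa using posSum_filter_partitionWeight hCS hq (fun _ => True)

theorem posSum_adj_partitionWeight (hCS : Disjoint C S) (hq : Admissible G C S q) (x : Fin n) :
    posSum {s ∈ S | G.Adj x s} (partitionWeight G C q) = 2 * nbrCount G q.2.2.1 x :=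
  posSum_filter_partitionWeight hCS hq _

theorem partitionWeight_of_mem {x : Fin n} (hx : x ∈ C) :
    partitionWeight G C q x = 2 * nbrCount G q.2.2.1 x +
      ((if x ∈ q.1 then 1 else 0) - (if x ∈ q.2.1 then 1 else 0) - 1) *
        (nbrCount G q.2.2.1 x + nbrCount G q.2.2.2 x) := by
  rw [partitionWeight, if_pos hx]
  ring

variable (G C) in
def isolated (X : Finset (Fin n)) : Finset (Fin n) := {x ∈ C | ∀ s ∈ X, ¬ G.Adj x s}

theorem good_partitionWeight (hCS : Disjoint C S) (hq : Admissible G C S q) :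
    good G C S (partitionWeight G C q) = q.1 ∪ isolated G C (q.2.2.1 ∪ q.2.2.2) := by
  ext x
  rw [good, mem_filter, posSum_adj_partitionWeight hCS hq, mem_union, isolated, mem_filter,
    ← nbrCount_add_eq_zero_iff]
  have hpm := add_nonneg (nbrCount_nonneg (G := G) q.2.2.1 x) (nbrCount_nonneg (G := G) q.2.2.2 x)
  constructor
  · rintro ⟨hx, h⟩
    rw [partitionWeight_of_mem hx] at h
    by_cases hp : x ∈ q.1
    · exact Or.inl hp
    · rw [if_neg hp] at h
      exact Or.inr ⟨hx, by split_ifs at h <;> linarith⟩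
  · rintro (hp | ⟨hx, hiso⟩)
    · rw [partitionWeight_of_mem (hq.1 hp), if_pos hp, if_neg (disjoint_left.1 hq.2.2.1 hp)]
      exact ⟨hq.1 hp, by ring⟩
    · rw [partitionWeight_of_mem hx, hiso]
      exact ⟨hx, by ring⟩

theorem Admissible.balanced (hCS : Disjoint C S) (hq : Admissible G C S q) :
    Balanced G C S (partitionConst q) (partitionWeight G C q) := by
  have hle : ∀ q : Quadruple n, Admissible G C S q → ∀ x ∈ C,
      partitionWeight G C q x ≤ posSum {s ∈ S | G.Adj x s} (partitionWeight G C q) :=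
    fun q hq x hx => by
      rw [posSum_adj_partitionWeight hCS hq, partitionWeight_of_mem hx]
      have := add_nonneg (nbrCount_nonneg (G := G) q.2.2.1 x) (nbrCount_nonneg (G := G) q.2.2.2 x)
      split_ifs <;> nlinarith
  refine ⟨?_, fun x hx => ⟨hle q hq x hx, ?_⟩⟩
  · rw [← partitionConst_swap, ← partitionWeight_swap, posSum_partitionWeight hCS hq,
      posSum_partitionWeight hCS hq.swap, partitionConst, partitionConst]
    simp only [Quadruple.swap]
    ring
  · simpa only [partitionWeight_swap, Pi.neg_apply] using hle q.swap hq.swap x hx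

theorem Admissible.topSets_eq (hG : IsSplitPartition G C S) (hq : Admissible G C S q) :
    topSets G (vertexValue (partitionConst q) (partitionWeight G C q)) =
      pattern G C q.2.2.1 q.2.2.2 (q.1 ∪ isolated G C (q.2.2.1 ∪ q.2.2.2)) := by
  rw [(hq.balanced hG.disjoint).topSets_eq hG, posSet_partitionWeight hG.disjoint hq,
    ← partitionWeight_swap, posSet_partitionWeight hG.disjoint hq.swap,
    good_partitionWeight hG.disjoint hq]
  rfl

theorem Admissible.right_mem_topSets (hG : IsSplitPartition G C S) (hq : Admissible G C S q) :
    q.2.2.1 ∈ topSets G (vertexValue (partitionConst q) (partitionWeight G C q)) := by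
  rw [hq.topSets_eq hG]
  refine ⟨hG.isStable.mono hq.2.2.2.1, fun s hs => disjoint_left.1 hq.2.2.2.2.2.1 hs,
    fun s hs _ => hs, fun x hx => ?_⟩
  rw [mem_inter] at hx
  exact absurd (hq.2.2.2.1 hx.1) (disjoint_left.1 hG.disjoint hx.2)

theorem Admissible.topSets_neg_eq (hG : IsSplitPartition G C S) (hq : Admissible G C S q) :
    topSets G (vertexValue (-partitionConst q) (-partitionWeight G C q)) =
      pattern G C q.2.2.2 q.2.2.1 (q.2.1 ∪ isolated G C (q.2.2.1 ∪ q.2.2.2)) := by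
  rw [← partitionConst_swap, ← partitionWeight_swap, hq.swap.topSets_eq hG]
  simp only [Quadruple.swap, union_comm q.2.2.2]

section Pattern

variable {P N K : Finset (Fin n)}

theorem mem_iff_forall_notMem_of_mem_pattern (hG : IsSplitPartition G C S) (hP : P ⊆ S)
    (hN : N ⊆ S) (hPN : Disjoint P N) (s : Fin n) :
    s ∈ N ↔ s ∈ S ∧ ∀ I ∈ pattern G C P N K, s ∉ I := by
  refine ⟨fun hs => ⟨hN hs, fun I hI hsI => hI.2.1 s hsI hs⟩, fun ⟨hsS, hs⟩ => ?_⟩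
  by_contra hsN
  refine hs (insert s P) ⟨hG.isStable.mono (insert_subset hsS hP), fun t ht => ?_,
    fun t ht _ => mem_insert_of_mem ht, fun x hx => ?_⟩ (mem_insert_self s P)
  · rcases mem_insert.1 ht with rfl | ht
    exacts [hsN, disjoint_left.1 hPN ht]
  · rw [mem_inter] at hx
    exact absurd (insert_subset hsS hP hx.1) (disjoint_left.1 hG.disjoint hx.2)

theorem mem_iff_exists_mem_pattern (hG : IsSplitPartition G C S) (hP : P ⊆ S)
    (hN : N ⊆ S) (hPN : Disjoint P N) (hK : K ⊆ C) (x : Fin n) :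
    x ∈ K ↔ x ∈ C ∧ ∃ I ∈ pattern G C P N K, x ∈ I := by
  refine ⟨fun hx => ⟨hK hx, insert x {s ∈ P | ¬ G.Adj x s}, ⟨?_, ?_, ?_, ?_⟩,
    mem_insert_self _ _⟩, fun ⟨hxC, I, hI, hxI⟩ => hI.2.2.2 (mem_inter.2 ⟨hxI, hxC⟩)⟩
  · exact (hG.isStable.mono ((filter_subset _ _).trans hP)).insert
      fun s hs => (mem_filter.1 hs).2
  · intro s hs
    rcases mem_insert.1 hs with rfl | hs
    exacts [fun h => disjoint_left.1 hG.disjoint (hK hx) (hN h),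
      disjoint_left.1 hPN (mem_filter.1 hs).1]
  · exact fun s hs hna => mem_insert_of_mem (mem_filter.2 ⟨hs, hna x (mem_inter.2
      ⟨mem_insert_self _ _, hK hx⟩)⟩)
  · intro y hy
    rw [mem_inter, mem_insert] at hy
    rcases hy with ⟨rfl | hy, hyC⟩
    exacts [hx, absurd (hP (mem_filter.1 hy).1) (disjoint_left.1 hG.disjoint hyC)]

theorem eq_of_pattern_eq (hG : IsSplitPartition G C S) {P' N' K' : Finset (Fin n)}
    (hP : P ⊆ S) (hN : N ⊆ S) (hPN : Disjoint P N) (hK : K ⊆ C)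
    (hP' : P' ⊆ S) (hN' : N' ⊆ S) (hPN' : Disjoint P' N') (hK' : K' ⊆ C)
    (h : pattern G C P N K = pattern G C P' N' K') : N = N' ∧ K = K' :=
  ⟨ext fun s => by rw [mem_iff_forall_notMem_of_mem_pattern hG hP hN hPN, h,
      ← mem_iff_forall_notMem_of_mem_pattern hG hP' hN' hPN'],
    ext fun x => by rw [mem_iff_exists_mem_pattern hG hP hN hPN hK, h,
      ← mem_iff_exists_mem_pattern hG hP' hN' hPN' hK']⟩

end Pattern

theorem isolated_subset (X : Finset (Fin n)) : isolated G C X ⊆ C := filter_subset _ _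

theorem Admissible.union_isolated_sdiff (hq : Admissible G C S q) :
    (q.1 ∪ isolated G C (q.2.2.1 ∪ q.2.2.2)) \ (q.2.1 ∪ isolated G C (q.2.2.1 ∪ q.2.2.2)) =
      q.1 := by
  ext x
  simp only [mem_sdiff, mem_union]
  refine ⟨fun ⟨hx, h⟩ => hx.resolve_right fun hiso => h (Or.inr hiso), fun hx => ⟨Or.inl hx, ?_⟩⟩
  rintro (hx' | hiso)
  · exact disjoint_left.1 hq.2.2.1 hx hx'
  · obtain ⟨s, hs, hxs⟩ := hq.2.2.2.2.2.2 x (mem_union_left _ hx)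
    exact (mem_filter.1 hiso).2 s hs hxs

theorem Admissible.eq_of_topSets_eq (hG : IsSplitPartition G C S) {q' : Quadruple n}
    (hq : Admissible G C S q) (hq' : Admissible G C S q')
    (hpos : topSets G (vertexValue (partitionConst q) (partitionWeight G C q)) =
      topSets G (vertexValue (partitionConst q') (partitionWeight G C q')))
    (hneg : topSets G (vertexValue (-partitionConst q) (-partitionWeight G C q)) =
      topSets G (vertexValue (-partitionConst q') (-partitionWeight G C q'))) : q = q' := by
  rw [hq.topSets_eq hG, hq'.topSets_eq hG] at hpos
  rw [hq.topSets_neg_eq hG, hq'.topSets_neg_eq hG] at hneg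
  obtain ⟨hSM, hK⟩ := eq_of_pattern_eq hG hq.2.2.2.1 hq.2.2.2.2.1 hq.2.2.2.2.2.1
    (union_subset hq.1 (isolated_subset _)) hq'.2.2.2.1 hq'.2.2.2.2.1 hq'.2.2.2.2.2.1
    (union_subset hq'.1 (isolated_subset _)) hpos
  obtain ⟨hSP, hK'⟩ := eq_of_pattern_eq hG hq.2.2.2.2.1 hq.2.2.2.1 hq.2.2.2.2.2.1.symm
    (union_subset hq.2.1 (isolated_subset _)) hq'.2.2.2.2.1 hq'.2.2.2.1 hq'.2.2.2.2.2.1.symm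
    (union_subset hq'.2.1 (isolated_subset _)) hneg
  have hCm := hq.swap.union_isolated_sdiff
  have hCm' := hq'.swap.union_isolated_sdiff
  simp only [Quadruple.swap, union_comm q.2.2.2, union_comm q'.2.2.2] at hCm hCm'
  refine Prod.ext ?_ (Prod.ext ?_ (Prod.ext hSP hSM))
  · rw [← hq.union_isolated_sdiff, hK, hK', hq'.union_isolated_sdiff]
  · rw [← hCm, hK, hK', hCm']

variable {a : ℝ} {w : Fin n → ℝ}

variable (G C S) in
def partitionOf (w : Fin n → ℝ) : Quadruple n :=
  (good G C S w \ good G C S (-w), good G C S (-w) \ good G C S w, posSet S w, posSet S (-w))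

theorem posSum_adj_eq_zero_iff {x : Fin n} :
    posSum {s ∈ S | G.Adj x s} w = 0 ↔ ∀ s ∈ posSet S w, ¬ G.Adj x s := by
  rw [posSum_eq_zero_iff, posSet_filter, filter_eq_empty_iff]

theorem Balanced.good_inter_good_neg (hb : Balanced G C S a w) :
    good G C S w ∩ good G C S (-w) = isolated G C (posSet S w ∪ posSet S (-w)) := by
  ext x
  simp only [mem_inter, good, isolated, mem_filter, mem_union, Pi.neg_apply]
  constructor
  · rintro ⟨⟨hx, h₁⟩, -, h₂⟩
    have h₀ : posSum {s ∈ S | G.Adj x s} w = 0 ∧ posSum {s ∈ S | G.Adj x s} (-w) = 0 := by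
      constructor <;> linarith [posSum_nonneg (T := {s ∈ S | G.Adj x s}) (w := w),
        posSum_nonneg (T := {s ∈ S | G.Adj x s}) (w := -w)]
    rw [posSum_adj_eq_zero_iff, posSum_adj_eq_zero_iff] at h₀
    exact ⟨hx, fun s hs => hs.elim (h₀.1 s) (h₀.2 s)⟩
  · rintro ⟨hx, h⟩
    have h₁ := posSum_adj_eq_zero_iff.2 fun s hs => h s (Or.inl hs)
    have h₂ := posSum_adj_eq_zero_iff.2 fun s hs => h s (Or.inr hs)
    have := hb.2 x hx
    rw [h₁, h₂] at this ⊢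
    exact ⟨⟨hx, by linarith⟩, hx, by linarith⟩

theorem Balanced.admissible_partitionOf (hb : Balanced G C S a w) :
    Admissible G C S (partitionOf G C S w) := by
  refine ⟨sdiff_subset.trans (filter_subset _ _), sdiff_subset.trans (filter_subset _ _),
    disjoint_sdiff_sdiff, filter_subset _ _, filter_subset _ _,
    disjoint_filter.2 fun s _ h₁ h₂ => by simp only [Pi.neg_apply] at h₂; linarith, ?_⟩
  intro x hx
  by_contra! h
  have hiso : x ∈ good G C S w ∩ good G C S (-w) := by
    rw [hb.good_inter_good_neg]
    refine mem_filter.2 ⟨?_, h⟩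
    rcases mem_union.1 hx with hx | hx <;> exact (mem_filter.1 (mem_sdiff.1 hx).1).1
  rcases mem_union.1 hx with hx | hx
  exacts [(mem_sdiff.1 hx).2 (mem_inter.1 hiso).2, (mem_sdiff.1 hx).2 (mem_inter.1 hiso).1]

theorem Balanced.topSets_partitionOf (hG : IsSplitPartition G C S) (hb : Balanced G C S a w) :
    topSets G (vertexValue (partitionConst (partitionOf G C S w))
        (partitionWeight G C (partitionOf G C S w))) = topSets G (vertexValue a w) ∧
      topSets G (vertexValue (-partitionConst (partitionOf G C S w))
        (-partitionWeight G C (partitionOf G C S w))) = topSets G (vertexValue (-a) (-w)) := by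
  have hq := hb.admissible_partitionOf
  rw [hq.topSets_eq hG, hq.topSets_neg_eq hG, hb.topSets_eq hG, hb.neg.topSets_eq hG, neg_neg]
  simp only [partitionOf, ← hb.good_inter_good_neg]
  rw [sdiff_union_inter, inter_comm, sdiff_union_inter]
  exact ⟨rfl, rfl⟩

theorem exists_admissible_partitionFace_eq (hG : IsSplitPartition G C S)
    (hprim : ∀ ε : ℝ, (ε = 1 ∨ ε = -1) → ∀ B ⊆ C, ¬ hansenFace G a w ⊆ hFace G ε B) :
    ∃ q, Admissible G C S q ∧ partitionFace G C q = hansenFace G a w := by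
  obtain ⟨⟨I, hI, hIS⟩, J, hJ, hJS⟩ := (isPrimitive_hansenFace_iff hG).1 hprim
  have hb := balanced_of_mem_topSets hG hI hIS hJ hJS
  exact ⟨_, hb.admissible_partitionOf, hansenFace_eq_iff.2 (hb.topSets_partitionOf hG)⟩

theorem Admissible.partitionFace_nonempty (hG : IsSplitPartition G C S)
    (hq : Admissible G C S q) : (partitionFace G C q).Nonempty :=
  ⟨_, (hansenVert_mem_hansenFace_iff (hq.right_mem_topSets hG).1).2 (hq.right_mem_topSets hG)⟩

theorem Admissible.isPrimitive_partitionFace (hG : IsSplitPartition G C S)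
    (hq : Admissible G C S q) :
    ∀ ε : ℝ, (ε = 1 ∨ ε = -1) → ∀ B ⊆ C, ¬ partitionFace G C q ⊆ hFace G ε B := by
  have hneg := hq.swap.right_mem_topSets hG
  rw [partitionConst_swap, partitionWeight_swap] at hneg
  exact (isPrimitive_hansenFace_iff hG).2
    ⟨⟨_, hq.right_mem_topSets hG, hq.2.2.2.1⟩, _, hneg, hq.2.2.2.2.1⟩

theorem injOn_partitionFace (hG : IsSplitPartition G C S) :
    Set.InjOn (partitionFace G C) {q | Admissible G C S q} := fun _ hq _ hq' h =>
  hq.eq_of_topSets_eq hG hq' (hansenFace_eq_iff.1 h).1 (hansenFace_eq_iff.1 h).2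

end Hansen

end

/-- For a split graph `G = C ∪ S` on `d − 1` vertices, the number of primitive faces of
`H(G)` (nonempty exposed faces contained in no type-(1)-facet `[ε, B]`, `ε = ±1`,
`B ⊆ C`) equals the number of partitions `(C⁺, C⁻, C⁰, S⁺, S⁻, S⁰)` of `(C, S)` —
encoded as quadruples `(C⁺, C⁻, S⁺, S⁻)` of disjoint subsets, including the trivial
partition — satisfying condition (A): every element of `C⁺ ∪ C⁻` has a neighbor in
`S⁺ ∪ S⁻`. -/
theorem hansen_split_primitive_face_count {n : ℕ} (G : SimpleGraph (Fin n))
    (C S : Finset (Fin n)) (hdisj : Disjoint C S) (hcover : C ∪ S = Finset.univ)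
    (hC : G.IsClique (↑C : Set (Fin n))) (hS : IsStable G S) :
    {F : Set (Fin (n + 1) → ℝ) | IsExposed ℝ (hansenPolytope G) F ∧ F.Nonempty ∧
        (∀ ε : ℝ, (ε = 1 ∨ ε = -1) → ∀ B ⊆ C, ¬ F ⊆ hFace G ε B)}.ncard =
      Set.ncard {q : Finset (Fin n) × Finset (Fin n) × Finset (Fin n) × Finset (Fin n) |
        q.1 ⊆ C ∧ q.2.1 ⊆ C ∧ Disjoint q.1 q.2.1 ∧
        q.2.2.1 ⊆ S ∧ q.2.2.2 ⊆ S ∧ Disjoint q.2.2.1 q.2.2.2 ∧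
        (∀ c ∈ q.1 ∪ q.2.1, ∃ s ∈ q.2.2.1 ∪ q.2.2.2, G.Adj c s)} := by
  have hG : Hansen.IsSplitPartition G C S := ⟨hdisj, hcover, hC, hS⟩
  have hfaces : {F : Set (Fin (n + 1) → ℝ) | IsExposed ℝ (hansenPolytope G) F ∧ F.Nonempty ∧
      (∀ ε : ℝ, (ε = 1 ∨ ε = -1) → ∀ B ⊆ C, ¬ F ⊆ hFace G ε B)} =
      Hansen.partitionFace G C '' {q | Hansen.Admissible G C S q} := by
    ext F
    constructor
    · rintro ⟨hexp, hne, hprim⟩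
      obtain ⟨l, rfl⟩ := hexp hne
      obtain ⟨a, w, rfl⟩ := Hansen.exists_eq_hansenFunctional l
      exact Hansen.exists_admissible_partitionFace_eq hG hprim
    · rintro ⟨q, hq, rfl⟩
      exact ⟨ContinuousLinearMap.toExposed.isExposed, hq.partitionFace_nonempty hG,
        hq.isPrimitive_partitionFace hG⟩
  rw [hfaces, (Hansen.injOn_partitionFace hG).ncard_image]
  rfl
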